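/- Impartial scoring play games form a non-trivial monoid but not a group under the sequential join: the impartial game G = {1, {0|0|0} | 0 | {0|0|0}, −1} has no inverse; i.e., there is no impartial game Y such that G ▷ Y ▷ P ≈ P for all impartial games P. -/

import Mathlib

inductive SGame : Type where
  | mk (score : ℝ) (L R : List SGame)

namespace SGame

def score : SGame → ℝ | .mk s _ _ => s
def L : SGame → List SGame | .mk _ l _ => l
def R : SGame → List SGame | .mk _ _ r => r

mutual
  noncomputable def leftScore : SGame → ℝ
    | .mk s l _ => ((l.attach.map fun x => rightScore x.1).maximum).getD s
  termination_by g => sizeOf g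
  decreasing_by
    have := List.sizeOf_lt_of_mem x.2
    simp only [SGame.mk.sizeOf_spec]
    omega
  noncomputable def rightScore : SGame → ℝ
    | .mk s _ r => ((r.attach.map fun x => leftScore x.1).minimum).getD s
  termination_by g => sizeOf g
  decreasing_by
    have := List.sizeOf_lt_of_mem x.2
    simp only [SGame.mk.sizeOf_spec]
    omega
end

/-- Conjunctive sum: move in all components simultaneously. -/
def conj : SGame → SGame → SGame
  | .mk s l r, .mk t l' r' =>
    .mk (s + t)
      (l.attach.flatMap fun x => l'.attach.map fun y => conj x.1 y.1)
      (r.attach.flatMap fun x => r'.attach.map fun y => conj x.1 y.1)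
termination_by G H => sizeOf G + sizeOf H
decreasing_by
  all_goals
    have h1 := List.sizeOf_lt_of_mem x.2
    have h2 := List.sizeOf_lt_of_mem y.2
    simp only [SGame.mk.sizeOf_spec]
    omega

/-- Selective sum: move in any nonempty subset of the components. -/
def sel : SGame → SGame → SGame
  | .mk s l r, .mk t l' r' =>
    .mk (s + t)
      ((l.attach.map fun x => sel x.1 (.mk t l' r')) ++
       (l'.attach.map fun y => sel (.mk s l r) y.1) ++
       (l.attach.flatMap fun x => l'.attach.map fun y => sel x.1 y.1))
      ((r.attach.map fun x => sel x.1 (.mk t l' r')) ++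
       (r'.attach.map fun y => sel (.mk s l r) y.1) ++
       (r.attach.flatMap fun x => r'.attach.map fun y => sel x.1 y.1))
termination_by G H => sizeOf G + sizeOf H
decreasing_by
  all_goals first
  | (have h1 := List.sizeOf_lt_of_mem x.2
     have h2 := List.sizeOf_lt_of_mem y.2
     simp only [SGame.mk.sizeOf_spec]; omega)
  | (have h1 := List.sizeOf_lt_of_mem x.2
     simp only [SGame.mk.sizeOf_spec]; omega)
  | (have h2 := List.sizeOf_lt_of_mem y.2
     simp only [SGame.mk.sizeOf_spec]; omega)

/-- Add `a` points (for Left) to every score of the game. -/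
def addScore (a : ℝ) : SGame → SGame
  | .mk s l r => .mk (a + s) (l.attach.map fun x => addScore a x.1)
      (r.attach.map fun x => addScore a x.1)
termination_by g => sizeOf g
decreasing_by
  all_goals
    have := List.sizeOf_lt_of_mem x.2
    simp only [SGame.mk.sizeOf_spec]; omega

/-- The negative of a game: swap the roles of Left and Right and negate all scores. -/
def neg : SGame → SGame
  | .mk s l r => .mk (-s) (r.attach.map fun x => neg x.1) (l.attach.map fun x => neg x.1)
termination_by g => sizeOf g
decreasing_by
  all_goals
    have := List.sizeOf_lt_of_mem x.2
    simp only [SGame.mk.sizeOf_spec]; omega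

/-- Impartial scoring game. -/
def Impartial : SGame → Prop
  | .mk s l r =>
    (l = [] ↔ r = []) ∧
    (∀ x ∈ l, ∃ y ∈ r, addScore (-s) x = neg (addScore (-s) y)) ∧
    (∀ x ∈ l.attach, Impartial x.1) ∧ (∀ y ∈ r.attach, Impartial y.1)
termination_by g => sizeOf g
decreasing_by
  all_goals
    first
    | (have := List.sizeOf_lt_of_mem x.2
       simp only [SGame.mk.sizeOf_spec]; omega)
    | (have := List.sizeOf_lt_of_mem y.2
       simp only [SGame.mk.sizeOf_spec]; omega)

/-- Sequential join: play all of `G` first, then continue in `H`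
    with the accumulated score. -/
def seq : SGame → SGame → SGame
  | .mk s [] [], H => addScore s H
  | .mk s l r, H =>
    .mk (s + H.score) (l.attach.map fun x => seq x.1 H)
      (r.attach.map fun x => seq x.1 H)
termination_by G _ => sizeOf G
decreasing_by
  all_goals
    have := List.sizeOf_lt_of_mem x.2
    simp only [SGame.mk.sizeOf_spec]; omega

/-- Outcome classes for scoring games. -/
inductive Outcome : Type where
  | L | R | N | P | Tie
deriving DecidableEq

open Classical in
/-- The outcome class of a scoring game, determined by the signs of the
    optimal final scores with Left, resp. Right, moving first. -/
noncomputable def outcome (G : SGame) : Outcome :=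
  if 0 < leftScore G ∧ rightScore G < 0 then .N
  else if leftScore G < 0 ∧ 0 < rightScore G then .P
  else if leftScore G = 0 ∧ rightScore G = 0 then .Tie
  else if 0 ≤ leftScore G ∧ 0 ≤ rightScore G then .L
  else .R

end SGame

/-!
Test a putative inverse `Y` against `P = {.|0|.}`. Since `G ▷ Y ▷ P = G ▷ Y` and `P` is a tie,
`G ▷ Y` would have to be a tie. But Left, moving first in `G ▷ Y`, can move to `1` and hand `Y`
to Right, scoring at least `1 + R(Y)`; Right, moving first, can move to `{0|0|0}`, whose forced
reply hands `Y` to Right again, holding the score to at most `R(Y)`. So the two optimal scores of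
`G ▷ Y` cannot both vanish.
-/

theorem List.maximum_map_of_monotone {α β : Type*} [LinearOrder α] [LinearOrder β] {f : α → β}
    (hf : Monotone f) (l : List α) : (l.map f).maximum = l.maximum.map f := by
  induction l with
  | nil => rfl
  | cons a l ih =>
    rw [List.map_cons, List.maximum_cons, List.maximum_cons, ih,
      (WithBot.monotone_map_iff.2 hf).map_max, WithBot.map_coe]

theorem List.minimum_map_of_monotone {α β : Type*} [LinearOrder α] [LinearOrder β] {f : α → β}
    (hf : Monotone f) (l : List α) : (l.map f).minimum = l.minimum.map f := by
  induction l with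
  | nil => rfl
  | cons a l ih =>
    rw [List.map_cons, List.minimum_cons, List.minimum_cons, ih,
      (WithTop.monotone_map_iff.2 hf).map_min, WithTop.map_coe]

namespace SGame

-- `ofScore s`, `zeroSwitch` and `nonInvertible` are the games `{.|s|.}`, `{0|0|0}` and `G`.
def ofScore (s : ℝ) : SGame := mk s [] []

theorem leftScore_mk (s : ℝ) (l r : List SGame) :
    leftScore (mk s l r) = ((l.map rightScore).maximum).getD s := by
  rw [leftScore, List.map_attach_eq_pmap, List.pmap_eq_map]

theorem rightScore_mk (s : ℝ) (l r : List SGame) :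
    rightScore (mk s l r) = ((r.map leftScore).minimum).getD s := by
  rw [rightScore, List.map_attach_eq_pmap, List.pmap_eq_map]

theorem addScore_mk (a s : ℝ) (l r : List SGame) :
    addScore a (mk s l r) = mk (a + s) (l.map (addScore a)) (r.map (addScore a)) := by
  rw [addScore]
  simp only [List.map_attach_eq_pmap, List.pmap_eq_map]

mutual
theorem leftScore_addScore (a : ℝ) : ∀ X : SGame, leftScore (addScore a X) = a + leftScore X
  | mk s l r => by
    have ih : ∀ x ∈ l, (rightScore ∘ addScore a) x = ((a + ·) ∘ rightScore) x :=
      fun x _ => rightScore_addScore a x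
    rw [addScore_mk, leftScore_mk, leftScore_mk, List.map_map, List.map_congr_left ih,
      ← List.map_map, List.maximum_map_of_monotone (add_right_mono (a := a))]
    exact Option.getD_map _ _ _
  termination_by X => sizeOf X
  decreasing_by
    have := List.sizeOf_lt_of_mem ‹x ∈ l›
    simp only [SGame.mk.sizeOf_spec]; omega

theorem rightScore_addScore (a : ℝ) : ∀ X : SGame, rightScore (addScore a X) = a + rightScore X
  | mk s l r => by
    have ih : ∀ x ∈ r, (leftScore ∘ addScore a) x = ((a + ·) ∘ leftScore) x :=
      fun x _ => leftScore_addScore a x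
    rw [addScore_mk, rightScore_mk, rightScore_mk, List.map_map, List.map_congr_left ih,
      ← List.map_map, List.minimum_map_of_monotone (add_right_mono (a := a))]
    exact Option.getD_map _ _ _
  termination_by X => sizeOf X
  decreasing_by
    have := List.sizeOf_lt_of_mem ‹x ∈ r›
    simp only [SGame.mk.sizeOf_spec]; omega
end

theorem seq_mk (s : ℝ) (l r : List SGame) (H : SGame) (h : ¬(l = [] ∧ r = [])) :
    seq (mk s l r) H = mk (s + H.score) (l.map (seq · H)) (r.map (seq · H)) := by
  rw [seq]
  · simp only [List.map_attach_eq_pmap, List.pmap_eq_map]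
  · simpa using h

theorem seq_ofScore (s : ℝ) (H : SGame) : seq (ofScore s) H = addScore s H := by
  rw [ofScore, seq]

theorem addScore_zero : ∀ X : SGame, addScore 0 X = X
  | mk s l r => by
    rw [addScore_mk, zero_add, List.map_congr_left (fun x _ => addScore_zero x),
      List.map_congr_left (fun x _ => addScore_zero x), List.map_id', List.map_id']
  termination_by X => sizeOf X
  decreasing_by
    all_goals
      have := List.sizeOf_lt_of_mem ‹x ∈ _›
      simp only [SGame.mk.sizeOf_spec]; omega

theorem seq_ofScore_zero : ∀ X : SGame, seq X (ofScore 0) = X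
  | mk s l r => by
    by_cases h : l = [] ∧ r = []
    · obtain ⟨rfl, rfl⟩ := h
      change seq (ofScore s) (ofScore 0) = ofScore s
      rw [seq_ofScore, ofScore, ofScore, addScore_mk, add_zero, List.map_nil]
    · rw [seq_mk s l r _ h, List.map_congr_left (fun x _ => seq_ofScore_zero x),
        List.map_congr_left (fun x _ => seq_ofScore_zero x), List.map_id', List.map_id', ofScore,
        score, add_zero]
  termination_by X => sizeOf X
  decreasing_by
    all_goals
      have := List.sizeOf_lt_of_mem ‹x ∈ _›
      simp only [SGame.mk.sizeOf_spec]; omega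

theorem leftScore_ofScore (s : ℝ) : leftScore (ofScore s) = s := by
  rw [ofScore, leftScore_mk]; rfl

theorem rightScore_ofScore (s : ℝ) : rightScore (ofScore s) = s := by
  rw [ofScore, rightScore_mk]; rfl

theorem leftScore_mk_singleton (s : ℝ) (x : SGame) (r : List SGame) :
    leftScore (mk s [x] r) = rightScore x := by
  rw [leftScore_mk, List.map_singleton, List.maximum_singleton]; rfl

theorem leftScore_mk_pair (s : ℝ) (x y : SGame) (r : List SGame) :
    leftScore (mk s [x, y] r) = max (rightScore x) (rightScore y) := by
  rw [leftScore_mk, List.map_cons, List.map_singleton, List.maximum_cons, List.maximum_singleton,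
    ← WithBot.coe_max]; rfl

theorem rightScore_mk_pair (s : ℝ) (l : List SGame) (x y : SGame) :
    rightScore (mk s l [x, y]) = min (leftScore x) (leftScore y) := by
  rw [rightScore_mk, List.map_cons, List.map_singleton, List.minimum_cons, List.minimum_singleton,
    ← WithTop.coe_min]; rfl

theorem impartial_ofScore (s : ℝ) : Impartial (ofScore s) := by
  rw [ofScore, Impartial]; simp

theorem outcome_eq_tie_iff (G : SGame) :
    outcome G = .Tie ↔ leftScore G = 0 ∧ rightScore G = 0 := by
  unfold outcome
  split_ifs <;> grind

theorem outcome_ofScore_zero : outcome (ofScore 0) = .Tie := by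
  rw [outcome_eq_tie_iff, leftScore_ofScore, rightScore_ofScore]
  exact ⟨rfl, rfl⟩

def zeroSwitch : SGame := mk 0 [ofScore 0] [ofScore 0]

def nonInvertible : SGame := mk 0 [ofScore 1, zeroSwitch] [zeroSwitch, ofScore (-1)]

theorem leftScore_seq_zeroSwitch (Y : SGame) : leftScore (seq zeroSwitch Y) = rightScore Y := by
  rw [zeroSwitch, seq_mk _ _ _ _ (by simp), List.map_singleton, leftScore_mk_singleton,
    seq_ofScore, addScore_zero]

theorem one_add_rightScore_le_leftScore_seq_nonInvertible (Y : SGame) :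
    1 + rightScore Y ≤ leftScore (seq nonInvertible Y) := by
  rw [nonInvertible, seq_mk _ _ _ _ (by simp)]
  simp only [List.map_cons, List.map_nil]
  rw [leftScore_mk_pair, seq_ofScore, rightScore_addScore]
  exact le_max_left _ _

theorem rightScore_seq_nonInvertible_le (Y : SGame) :
    rightScore (seq nonInvertible Y) ≤ rightScore Y := by
  rw [nonInvertible, seq_mk _ _ _ _ (by simp)]
  simp only [List.map_cons, List.map_nil]
  rw [rightScore_mk_pair, leftScore_seq_zeroSwitch]
  exact min_le_left _ _

theorem outcome_seq_nonInvertible_ne_tie (Y : SGame) : outcome (seq nonInvertible Y) ≠ .Tie := by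
  rw [Ne, outcome_eq_tie_iff]
  rintro ⟨hL, hR⟩
  linarith [one_add_rightScore_le_leftScore_seq_nonInvertible Y, rightScore_seq_nonInvertible_le Y]

end SGame

open SGame in
/-- Impartial scoring games do not form a group under the sequential join:
the impartial game `G = {1, {0|0|0} | 0 | {0|0|0}, −1}` has no inverse, i.e. there
is no impartial `Y` with `G ▷ Y ▷ P ≈ P` (equal outcomes) for all impartial `P`. -/
theorem seq_impartial_not_group :
    let z : SGame := .mk 0 [.mk 0 [] []] [.mk 0 [] []]
    let G : SGame := .mk 0 [.mk 1 [] [], z] [z, .mk (-1) [] []]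
    ¬ ∃ Y : SGame, Impartial Y ∧
        ∀ P : SGame, Impartial P → outcome (seq (seq G Y) P) = outcome P := by
  intro z G
  rintro ⟨Y, -, hY⟩
  have htie := hY (ofScore 0) (impartial_ofScore 0)
  rw [seq_ofScore_zero, outcome_ofScore_zero] at htie
  exact outcome_seq_nonInvertible_ne_tie Y htie
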